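/- For the U-shaped attribution rule, the impression adjacency relation with post-attribution contribution bound enforcement is invalid: for any p > 3 there exist adjacent datasets D and D' (differing by one impression), using contribution bound r = 1, such that ‖attr(D) - attr(D')‖₁ ≥ 0.2 ln((p-1)/4). Hence the ℓ1-distance is not bounded by C₀·r for any absolute constant C₀. -/

import Mathlib

/-! Framework for differentially private ad conversion measurement
(Delaney et al., "Differentially Private Ad Conversion Measurement"). -/

structure Impression where
  time : ℕ
  user : ℕ
  pub : ℕ
  adv : ℕ
  id : ℕ
deriving DecidableEq

structure Conversion where
  time : ℕ
  user : ℕ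
  adv : ℕ
  id : ℕ
deriving DecidableEq

structure Dataset where
  imps : List Impression
  convs : List Conversion

/-- An attribution rule maps a time-ordered list of impressions and a conversion
to a list of credits (one per impression). -/
abbrev AttrRule := List Impression → Conversion → List ℝ

/-- A valid attribution rule outputs one nonnegative weight per impression, summing to 1. -/
def ValidRule (a : AttrRule) : Prop :=
  ∀ is c, is ≠ [] →
    (a is c).length = is.length ∧ (a is c).sum = 1 ∧ ∀ w ∈ a is c, (0 : ℝ) ≤ w

/-- Impressions eligible for attribution of conversion `c`: those occurring earlier
with the same user and advertiser. -/
def eligible (D : Dataset) (c : Conversion) : List Impression :=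
  D.imps.filter fun i => decide (i.time < c.time ∧ i.user = c.user ∧ i.adv = c.adv)

/-- ℓ₁ distance between attributed datasets. -/
noncomputable def l1dist (w w' : (Impression × Conversion) →₀ ℝ) : ℝ :=
  (w - w').sum fun _ v => |v|

/-- Impressions and conversions are listed in time order. -/
def SortedDS (D : Dataset) : Prop :=
  D.imps.Pairwise (fun i j => i.time ≤ j.time) ∧
  D.convs.Pairwise (fun c c' => c.time ≤ c'.time)

/-- Inner loop of post-attribution contribution-bound enforcement: each weighted
(impression, conversion) pair is kept only if the remaining bound of its scope covers
the weight, in which case the weight is deducted. -/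
noncomputable def applyPairs {σ : Type} [DecidableEq σ] (s : Impression → σ) (c : Conversion) :
    List (Impression × ℝ) → (σ → ℝ) × ((Impression × Conversion) →₀ ℝ) →
      (σ → ℝ) × ((Impression × Conversion) →₀ ℝ)
  | [], st => st
  | (i, w) :: rest, st =>
      if w ≤ st.1 (s i) then
        applyPairs s c rest
          (Function.update st.1 (s i) (st.1 (s i) - w), st.2 + Finsupp.single (i, c) w)
      else
        applyPairs s c rest st

/-- Attribution with post-attribution contribution bound enforcement (Algorithm 1),
with contribution bounding scope map `s` and contribution bound `r`. -/
noncomputable def postAttr {σ : Type} [DecidableEq σ] (a : AttrRule) (s : Impression → σ)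
    (r : ℝ) (D : Dataset) : (Impression × Conversion) →₀ ℝ :=
  (D.convs.foldl
    (fun st c => applyPairs s c ((eligible D c).zip (a (eligible D c) c)) st)
    ((fun _ => r : σ → ℝ), (0 : (Impression × Conversion) →₀ ℝ))).2

/-- Attribution with pre-attribution contribution bound enforcement (Algorithm 2):
for each conversion, every scope with an eligible impression pays one unit of its bound
if available, otherwise its impressions are excluded from attribution. -/
noncomputable def preAttr {σ : Type} [DecidableEq σ] (a : AttrRule) (s : Impression → σ)
    (r : ℝ) (D : Dataset) : (Impression × Conversion) →₀ ℝ :=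
  (D.convs.foldl
    (fun (st : (σ → ℝ) × ((Impression × Conversion) →₀ ℝ)) c =>
      let el := eligible D c
      let surv := el.filter fun i => decide ((1 : ℝ) ≤ st.1 (s i))
      let scopes := (el.map s).dedup
      ((fun x => if x ∈ scopes ∧ (1 : ℝ) ≤ st.1 x then st.1 x - 1 else st.1 x : σ → ℝ),
        st.2 + ((surv.zip (a surv c)).map fun p => Finsupp.single (p.1, c) p.2).sum))
    ((fun _ => r : σ → ℝ), (0 : (Impression × Conversion) →₀ ℝ))).2

/-- Attribution without any contribution bound enforcement. -/
noncomputable def attrNoCap (a : AttrRule) (D : Dataset) :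
    (Impression × Conversion) →₀ ℝ :=
  (D.convs.map fun c =>
    (((eligible D c).zip (a (eligible D c) c)).map fun p => Finsupp.single (p.1, c) p.2).sum).sum

/-- Adjacency: `D'` results from `D` by adding a single impression (in time order). -/
def AddOneImpression (D D' : Dataset) : Prop :=
  ∃ (i0 : Impression) (l₁ l₂ : List Impression),
    D.imps = l₁ ++ l₂ ∧ D'.imps = l₁ ++ i0 :: l₂ ∧ D.convs = D'.convs

/-- Adjacency: `D` results from `D'` by removing all impressions whose scope (under `si`)
is `v` and all conversions whose scope (under `sc`) is `v`. -/
def RemovesScope {σ : Type} [DecidableEq σ] (si : Impression → σ)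
    (sc : Conversion → Option σ) (v : σ) (D D' : Dataset) : Prop :=
  D.imps = D'.imps.filter (fun i => decide (si i ≠ v)) ∧
  D.convs = D'.convs.filter (fun c => decide (sc c ≠ some v))

/-- First-touch attribution. -/
noncomputable def FTA : AttrRule := fun is _ =>
  match is with
  | [] => []
  | _ :: t => 1 :: t.map fun _ => 0

/-- Last-touch attribution. -/
noncomputable def LTA : AttrRule := fun is _ =>
  match is with
  | [] => []
  | _ :: _ => List.replicate (is.length - 1) 0 ++ [1]

/-- Uniform multi-touch attribution. -/
noncomputable def UNI : AttrRule := fun is _ => is.map fun _ => ((is.length : ℝ))⁻¹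

/-- U-shaped attribution. -/
noncomputable def USH : AttrRule := fun is _ =>
  match is with
  | [] => []
  | [_] => [1]
  | [_, _] => [0.5, 0.5]
  | _ :: _ :: _ :: _ =>
      (0.4 : ℝ) :: (List.replicate (is.length - 2) ((0.2 : ℝ) / ((is.length : ℝ) - 2)) ++ [0.4])

/-- Exponential time decay attribution with half-life `th`. -/
noncomputable def EXPR (th : ℝ) : AttrRule := fun is c =>
  let wt : Impression → ℝ := fun i => (2 : ℝ) ^ (-(((c.time : ℝ) - (i.time : ℝ)) / th))
  is.map fun i => wt i / (is.map wt).sum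

/-!
Place impression `i_k` at time `k²` and, for each level `j ≥ 4`, the `j - 2` conversions of
that level strictly between `i_j` and `i_{j+1}`; `D'` keeps `i₁, …, i_p` and `D` drops `i₁`.
With a per-impression bound of `1`, impression `i_k` (`k ≥ 4`) is first paid `0.4` twice as the
last touch of level `k`, leaving `0.2`, and is then a middle touch of the `k - 1` conversions of
level `k + 1`. In `D'` each of them asks `0.2 / (k - 1)`, so all are paid; in `D` each asks
`0.2 / (k - 2)`, so the last one is refused. That one pair already differs by `0.2 / (k - 1)`,
and `∑_{k=4}^{p-1} 1 / (k - 1) ≥ ln ((p - 1) / 3)`.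
-/

lemma List.Nodup.map_fst_zip {α β : Type*} {l₁ : List α} (h : l₁.Nodup) (l₂ : List β) :
    ((l₁.zip l₂).map Prod.fst).Nodup := by
  rw [List.zip_eq_zip_take_min, List.map_fst_zip (by simp)]
  exact h.sublist (List.take_sublist _ _)

lemma List.lookup_eq_none_of_notMem_map_fst {α β : Type*} [DecidableEq α] {L : List (α × β)}
    {x : α} (h : x ∉ L.map Prod.fst) : L.lookup x = none :=
  List.lookup_eq_none_iff.2 fun p hp => by
    simpa using fun hx : x = p.1 => h (hx ▸ List.mem_map_of_mem hp)

lemma List.lookup_map_pair {α β γ : Type*} [DecidableEq α] [DecidableEq β] {f : α → β}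
    (hf : f.Injective) (g : α → γ) (L : List α) (k : α) :
    (L.map fun i => (f i, g i)).lookup (f k) = if k ∈ L then some (g k) else none := by
  induction L with
  | nil => simp
  | cons i L ih =>
    rw [List.map_cons, List.lookup_cons]
    by_cases hki : k = i
    · subst hki
      simp
    · rw [beq_false_of_ne (hf.ne hki), ih]
      simp [hki]

lemma List.map_Ico_ite_endpoints {β : Type*} {a j : ℕ} (h : a < j) (u v : β) :
    (List.Ico a (j + 1)).map (fun k => if k = a ∨ k = j then u else v) =
      u :: (List.replicate (j - 1 - a) v ++ [u]) := by
  rw [List.Ico.eq_cons (by omega), List.Ico.succ_top h, List.map_cons, List.map_append]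
  simp only [true_or, if_true, List.map_cons, List.map_nil, or_true]
  congr 2
  refine List.eq_replicate_iff.2 ⟨by simp; omega, fun b hb => ?_⟩
  obtain ⟨k, hk, rfl⟩ := List.mem_map.1 hb
  rw [List.Ico.mem] at hk
  rw [if_neg (by omega)]

lemma Real.log_div_le_sum_Ico_inv {n N : ℕ} (hn : 0 < n) (hnN : n ≤ N) :
    Real.log (N / n) ≤ ∑ i ∈ Finset.Ico n N, (i : ℝ)⁻¹ := by
  have hn' : (0 : ℝ) < n := by exact_mod_cast hn
  rw [← integral_inv (Set.notMem_uIcc_of_lt hn' (hn'.trans_le (by exact_mod_cast hnN)))]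
  exact (inv_antitoneOn_Icc_right hn').integral_le_sum_Ico hnN

abbrev PostAttrState := (Impression → ℝ) × ((Impression × Conversion) →₀ ℝ)

noncomputable def grant (b : ℝ) : Option ℝ → ℝ
  | none => 0
  | some w => if w ≤ b then w else 0

@[simp] lemma grant_none (b : ℝ) : grant b none = 0 := rfl

@[simp] lemma grant_some (b w : ℝ) : grant b (some w) = if w ≤ b then w else 0 := rfl

section Greedy

variable {α : Type*} (f : α → Option ℝ)

lemma foldl_sub_grant_of_forall_eq_none (l : List α) (b : ℝ) (h : ∀ c ∈ l, f c = none) :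
    l.foldl (fun b c => b - grant b (f c)) b = b := by
  induction l with
  | nil => rfl
  | cons c l ih =>
    rw [List.foldl_cons, h c List.mem_cons_self, grant_none, sub_zero]
    exact ih fun c hc => h c (List.mem_cons_of_mem _ hc)

/-- The truncated subtraction `m - l.length` is the point: once only `ε < w` is left, every
further request is refused. -/
lemma foldl_sub_grant_of_forall_eq_some {w ε : ℝ} (hε : 0 ≤ ε) (hεw : ε < w) (l : List α)
    (h : ∀ c ∈ l, f c = some w) (m : ℕ) :
    l.foldl (fun b c => b - grant b (f c)) (m * w + ε) =
      ((m - l.length : ℕ) : ℝ) * w + ε := by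
  induction l generalizing m with
  | nil => simp
  | cons c l ih =>
    have ih' := ih (fun c hc => h c (List.mem_cons_of_mem _ hc))
    rw [List.foldl_cons, h c List.mem_cons_self, grant_some, List.length_cons]
    cases m with
    | zero => simpa [hεw.not_ge] using ih' 0
    | succ m =>
      rw [if_pos (by push_cast; nlinarith), show (↑(m + 1) : ℝ) * w + ε - w = m * w + ε by
        push_cast; ring, ih' m, Nat.add_sub_add_right]

end Greedy

noncomputable def credit (a : AttrRule) (D : Dataset) (x : Impression) (c : Conversion) :
    Option ℝ :=
  ((eligible D c).zip (a (eligible D c) c)).lookup x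

section ApplyPairs

variable (c : Conversion) (x : Impression)

lemma applyPairs_fst_apply :
    ∀ (L : List (Impression × ℝ)) (st : PostAttrState),
      (L.map Prod.fst).Nodup →
      (applyPairs (fun i => i) c L st).1 x = st.1 x - grant (st.1 x) (L.lookup x)
  | [], _, _ => by simp [applyPairs]
  | (i, w) :: L, st, hL => by
    rw [List.map_cons, List.nodup_cons] at hL
    have ih := fun st => applyPairs_fst_apply L st hL.2
    simp only [applyPairs]
    by_cases hxi : x = i
    · subst hxi
      rw [List.lookup_cons_self, grant_some]
      split_ifs <;> simp [ih, List.lookup_eq_none_of_notMem_map_fst hL.1]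
    · rw [List.lookup_cons, beq_false_of_ne hxi]
      split_ifs <;> simp [ih, Function.update_of_ne hxi]

lemma applyPairs_snd_apply_self :
    ∀ (L : List (Impression × ℝ)) (st : PostAttrState),
      (L.map Prod.fst).Nodup →
      (applyPairs (fun i => i) c L st).2 (x, c) = st.2 (x, c) + grant (st.1 x) (L.lookup x)
  | [], _, _ => by simp [applyPairs]
  | (i, w) :: L, st, hL => by
    rw [List.map_cons, List.nodup_cons] at hL
    have ih := fun st => applyPairs_snd_apply_self L st hL.2
    simp only [applyPairs]
    by_cases hxi : x = i
    · subst hxi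
      rw [List.lookup_cons_self, grant_some]
      split_ifs <;> simp [ih, List.lookup_eq_none_of_notMem_map_fst hL.1]
    · rw [List.lookup_cons, beq_false_of_ne hxi]
      split_ifs <;> simp [ih, Function.update_of_ne hxi, Ne.symm hxi]

lemma applyPairs_snd_apply_of_ne {c' : Conversion} (hc : c' ≠ c) :
    ∀ (L : List (Impression × ℝ)) (st : PostAttrState),
      (applyPairs (fun i => i) c L st).2 (x, c') = st.2 (x, c')
  | [], _ => rfl
  | (i, w) :: L, st => by
    simp only [applyPairs]
    split_ifs <;> simp [applyPairs_snd_apply_of_ne hc L, Ne.symm hc]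

end ApplyPairs

section PostAttr

variable (a : AttrRule) (D : Dataset)

noncomputable def postAttrStep (st : PostAttrState) (c : Conversion) : PostAttrState :=
  applyPairs (fun i => i) c ((eligible D c).zip (a (eligible D c) c)) st

variable {a D}

lemma nodup_eligible (hD : D.imps.Nodup) (c : Conversion) : (eligible D c).Nodup :=
  hD.filter _

lemma foldl_postAttrStep_fst_apply (hD : D.imps.Nodup) (x : Impression) :
    ∀ (cs : List Conversion) (st : PostAttrState),
      (cs.foldl (postAttrStep a D) st).1 x =
        cs.foldl (fun b c => b - grant b (credit a D x c)) (st.1 x)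
  | [], _ => rfl
  | c :: cs, st => by
    rw [List.foldl_cons, List.foldl_cons, foldl_postAttrStep_fst_apply hD x cs, postAttrStep,
      applyPairs_fst_apply _ _ _ _ ((nodup_eligible hD c).map_fst_zip _), credit]

lemma foldl_postAttrStep_snd_apply_of_notMem (x : Impression) {c : Conversion} :
    ∀ (cs : List Conversion) (st : PostAttrState),
      c ∉ cs → (cs.foldl (postAttrStep a D) st).2 (x, c) = st.2 (x, c)
  | [], _, _ => rfl
  | c' :: cs, st, hc => by
    rw [List.mem_cons, not_or] at hc
    rw [List.foldl_cons, foldl_postAttrStep_snd_apply_of_notMem x cs _ hc.2, postAttrStep,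
      applyPairs_snd_apply_of_ne _ _ hc.1]

theorem postAttr_apply (r : ℝ) (hD : D.imps.Nodup) (hC : D.convs.Nodup)
    {cs₁ cs₂ : List Conversion} {c : Conversion} (hconvs : D.convs = cs₁ ++ c :: cs₂)
    (x : Impression) :
    postAttr a (fun i => i) r D (x, c) =
      grant (cs₁.foldl (fun b c => b - grant b (credit a D x c)) r) (credit a D x c) := by
  rw [hconvs, List.nodup_middle, List.nodup_cons, List.mem_append, not_or] at hC
  obtain ⟨⟨h₁, h₂⟩, -⟩ := hC
  change (D.convs.foldl (postAttrStep a D) ((fun _ => r), 0)).2 (x, c) = _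
  rw [hconvs, List.foldl_append, List.foldl_cons, foldl_postAttrStep_snd_apply_of_notMem x _ _ h₂,
    postAttrStep, applyPairs_snd_apply_self _ _ _ _ ((nodup_eligible hD c).map_fst_zip _),
    foldl_postAttrStep_snd_apply_of_notMem x _ _ h₁, foldl_postAttrStep_fst_apply hD, credit]
  simp

end PostAttr

lemma USH_of_three_le_length (l : List Impression) (c : Conversion) (h : 3 ≤ l.length) :
    USH l c =
      0.4 :: (List.replicate (l.length - 2) ((0.2 : ℝ) / ((l.length : ℝ) - 2)) ++ [0.4]) := by
  match l, h with
  | _ :: _ :: _ :: _, _ => rfl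

lemma sum_abs_sub_le_l1dist (f g : (Impression × Conversion) →₀ ℝ)
    (S : Finset (Impression × Conversion)) : ∑ z ∈ S, |f z - g z| ≤ l1dist f g := by
  rw [l1dist, Finsupp.sum_of_support_subset _ Finset.subset_union_right _ (by simp)]
  simp only [Finsupp.coe_sub, Pi.sub_apply]
  exact Finset.sum_le_sum_of_subset_of_nonneg Finset.subset_union_left
    (fun _ _ _ => abs_nonneg _)

namespace Cascade

def imp (k : ℕ) : Impression := ⟨k * k, 0, 0, 0, k⟩

def conv (j t : ℕ) : Conversion := ⟨j * j + t, 0, 0, j * j + t⟩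

def level (j : ℕ) : List Conversion := (List.Ico 1 (j - 1)).map (conv j)

def convs (p : ℕ) : List Conversion := (List.Ico 4 (p + 1)).flatMap level

/-- `data p 1` is the paper's `D'` and `data p 2` its `D`. -/
def data (p a : ℕ) : Dataset := ⟨(List.Ico a (p + 1)).map imp, convs p⟩

lemma imp_injective : Function.Injective imp := fun _ _ h => congrArg Impression.id h

lemma imp_time_lt_conv_time_iff {k j t : ℕ} (ht : 0 < t) (htj : t ≤ 2 * j) :
    (imp k).time < (conv j t).time ↔ k ≤ j := by
  simp only [imp, conv]
  constructor
  · intro h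
    by_contra! hjk
    nlinarith
  · intro h
    nlinarith

lemma conv_time_lt_of_lt {j j' t t' : ℕ} (hjj : j < j') (ht : t ≤ 2 * j) :
    (conv j t).time < (conv j' t').time := by
  simp only [conv]
  nlinarith

lemma convs_pairwise_time_lt (p : ℕ) : (convs p).Pairwise fun c c' => c.time < c'.time := by
  refine List.pairwise_flatMap.2 ⟨fun j _ => ?_, ?_⟩
  · exact List.pairwise_map.2 ((List.Ico.pairwise_lt _ _).imp fun h => by simp [conv, h])
  · refine (List.Ico.pairwise_lt _ _).imp fun hjj c hc c' hc' => ?_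
    obtain ⟨t, ht, rfl⟩ := List.mem_map.1 hc
    obtain ⟨t', -, rfl⟩ := List.mem_map.1 hc'
    exact conv_time_lt_of_lt hjj (by rw [List.Ico.mem] at ht; omega)

lemma convs_nodup (p : ℕ) : (convs p).Nodup :=
  (convs_pairwise_time_lt p).imp fun h he => h.ne (congrArg Conversion.time he)

lemma data_imps_nodup (p a : ℕ) : (data p a).imps.Nodup :=
  (List.Ico.nodup _ _).map imp_injective

lemma sortedDS_data (p a : ℕ) : SortedDS (data p a) :=
  ⟨List.pairwise_map.2 ((List.Ico.pairwise_lt _ _).imp fun h => by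
      simp only [imp]; exact Nat.mul_self_le_mul_self h.le),
    (convs_pairwise_time_lt p).imp le_of_lt⟩

lemma addOneImpression_data {p : ℕ} (hp : 0 < p) : AddOneImpression (data p 2) (data p 1) :=
  ⟨imp 1, [], (List.Ico 2 (p + 1)).map imp, rfl,
    by simp [data, List.Ico.eq_cons (show 1 < p + 1 by omega)], rfl⟩

lemma eligible_data_conv {p a j t : ℕ} (hj : j ≤ p) (ht : 0 < t) (htj : t ≤ 2 * j) :
    eligible (data p a) (conv j t) = (List.Ico a (j + 1)).map imp := by
  rw [eligible, data, List.filter_map]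
  congr 1
  rw [List.filter_congr (q := fun k => decide (k < j + 1)) fun k _ => by
      simp only [Function.comp_apply, imp_time_lt_conv_time_iff ht htj]
      simp [imp, conv],
    List.Ico.filter_lt, min_eq_right (by omega)]

lemma credit_USH_data_conv {p a j t : ℕ} (k : ℕ) (hj : j ≤ p) (ha : a + 2 ≤ j) (ht : 0 < t)
    (htj : t ≤ 2 * j) :
    credit USH (data p a) (imp k) (conv j t) =
      if k ∈ List.Ico a (j + 1) then
        some (if k = a ∨ k = j then 0.4 else 0.2 / ((j - 1 - a : ℕ) : ℝ))
      else none := by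
  have hlen : ((j + 1 - a : ℕ) : ℝ) - 2 = ((j - 1 - a : ℕ) : ℝ) := by
    rw [show j + 1 - a = (j - 1 - a) + 2 by omega]
    push_cast
    ring
  rw [credit, eligible_data_conv hj ht htj, USH_of_three_le_length _ _ (by simp; omega),
    List.length_map, List.Ico.length, hlen, show j + 1 - a - 2 = j - 1 - a by omega,
    ← List.map_Ico_ite_endpoints (by omega), List.zip_map', List.lookup_map_pair imp_injective]

lemma convs_eq_split {p k t : ℕ} (hk : 4 ≤ k) (hkp : k < p) (ht : 0 < t) (htk : t < k) :
    convs p =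
      ((List.Ico 4 k).flatMap level ++ level k ++ (List.Ico 1 t).map (conv (k + 1))) ++
        conv (k + 1) t ::
          ((List.Ico (t + 1) k).map (conv (k + 1)) ++
            (List.Ico (k + 2) (p + 1)).flatMap level) := by
  have hlevels :
      List.Ico 4 (p + 1) = List.Ico 4 k ++ k :: (k + 1) :: List.Ico (k + 2) (p + 1) := by
    rw [← List.Ico.append_consecutive hk (by omega : k ≤ p + 1),
      List.Ico.eq_cons (by omega : k < p + 1),
      List.Ico.eq_cons (by omega : k + 1 < p + 1)]
  have hlevel : level (k + 1) =
      (List.Ico 1 t).map (conv (k + 1)) ++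
        conv (k + 1) t :: (List.Ico (t + 1) k).map (conv (k + 1)) := by
    rw [level, Nat.add_sub_cancel, ← List.Ico.append_consecutive ht htk.le,
      List.Ico.eq_cons htk, List.map_append, List.map_cons]
  simp only [convs, hlevels, List.flatMap_append, List.flatMap_cons, hlevel, List.append_assoc,
    List.cons_append]

theorem postAttr_USH_data_apply {p a k t : ℕ} (ha : a ≤ 2) (hk : 4 ≤ k) (hkp : k < p)
    (ht : 0 < t) (htk : t < k) :
    postAttr USH (fun i => i) 1 (data p a) (imp k, conv (k + 1) t) =
      if t ≤ k - a then 0.2 / ((k - a : ℕ) : ℝ) else 0 := by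
  set w : ℝ := 0.2 / ((k - a : ℕ) : ℝ) with hw_def
  have hka : (0 : ℝ) < (k - a : ℕ) := by exact_mod_cast (by omega : 0 < k - a)
  have hw : 0 < w := div_pos (by norm_num) hka
  have hbefore :
      ∀ c ∈ (List.Ico 4 k).flatMap level, credit USH (data p a) (imp k) c = none := by
    intro c hc
    obtain ⟨j, hj, hc⟩ := List.mem_flatMap.1 hc
    obtain ⟨t', ht', rfl⟩ := List.mem_map.1 hc
    rw [List.Ico.mem] at hj ht'
    rw [credit_USH_data_conv k (by omega) (by omega) (by omega) (by omega),
      if_neg (by rw [List.Ico.mem]; omega)]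
  have hlast : ∀ c ∈ level k, credit USH (data p a) (imp k) c = some 0.4 := by
    intro c hc
    obtain ⟨t', ht', rfl⟩ := List.mem_map.1 hc
    rw [List.Ico.mem] at ht'
    rw [credit_USH_data_conv k (by omega) (by omega) (by omega) (by omega),
      if_pos (by rw [List.Ico.mem]; omega), if_pos (Or.inr rfl)]
  have hmiddle : ∀ t', 0 < t' → t' < k →
      credit USH (data p a) (imp k) (conv (k + 1) t') = some w := by
    intro t' ht' htk'
    rw [credit_USH_data_conv k (by omega) (by omega) ht' (by omega),
      if_pos (by rw [List.Ico.mem]; omega), if_neg (by omega), show k + 1 - 1 - a = k - a by omega]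
  have hmiddle' : ∀ c ∈ (List.Ico 1 t).map (conv (k + 1)),
      credit USH (data p a) (imp k) c = some w := by
    intro c hc
    obtain ⟨t', ht', rfl⟩ := List.mem_map.1 hc
    rw [List.Ico.mem] at ht'
    exact hmiddle t' (by omega) (by omega)
  have h02 : (0.2 : ℝ) = ((k - a : ℕ) : ℝ) * w + 0 := by
    rw [hw_def, add_zero]
    field_simp
  rw [postAttr_apply 1 (data_imps_nodup p a) (convs_nodup p) (convs_eq_split hk hkp ht htk),
    List.foldl_append, List.foldl_append, foldl_sub_grant_of_forall_eq_none _ _ _ hbefore,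
    show (1 : ℝ) = ((2 : ℕ) : ℝ) * 0.4 + 0.2 by norm_num,
    foldl_sub_grant_of_forall_eq_some _ (by norm_num) (by norm_num) _ hlast,
    show 2 - (level k).length = 0 by simp [level]; omega, Nat.cast_zero, zero_mul, zero_add, h02,
    foldl_sub_grant_of_forall_eq_some _ le_rfl hw _ hmiddle', hmiddle t ht htk, grant_some,
    add_zero]
  refine if_congr ?_ rfl rfl
  rw [le_mul_iff_one_le_left hw, Nat.one_le_cast, List.length_map, List.Ico.length]
  omega

theorem log_le_l1dist_postAttr_USH {p : ℕ} (hp : 4 ≤ p) :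
    0.2 * Real.log (((p - 1 : ℕ) : ℝ) / 3) ≤
      l1dist (postAttr USH (fun i => i) 1 (data p 2))
        (postAttr USH (fun i => i) 1 (data p 1)) := by
  set f := postAttr USH (fun i => i) 1 (data p 2)
  set g := postAttr USH (fun i => i) 1 (data p 1)
  set e : ℕ → Impression × Conversion := fun m => (imp (m + 1), conv (m + 1 + 1) m)
  have he : Set.InjOn e (Finset.Ico 3 (p - 1)) := fun m _ m' _ h =>
    Nat.succ_injective (imp_injective (congrArg Prod.fst h))
  have hgap : ∀ m ∈ Finset.Ico 3 (p - 1), |f (e m) - g (e m)| = 0.2 * (m : ℝ)⁻¹ := by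
    intro m hm
    rw [Finset.mem_Ico] at hm
    rw [postAttr_USH_data_apply (by norm_num) (by omega) (by omega) (by omega) (by omega),
      postAttr_USH_data_apply (by norm_num) (by omega) (by omega) (by omega) (by omega),
      if_neg (by omega), if_pos (by omega), Nat.add_sub_cancel, zero_sub, abs_neg,
      abs_of_pos (div_pos (by norm_num) (by exact_mod_cast (by omega : 0 < m))), div_eq_mul_inv]
  calc 0.2 * Real.log (((p - 1 : ℕ) : ℝ) / 3)
      ≤ 0.2 * ∑ m ∈ Finset.Ico 3 (p - 1), (m : ℝ)⁻¹ := by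
        gcongr
        exact_mod_cast Real.log_div_le_sum_Ico_inv (n := 3) (N := p - 1) (by norm_num) (by omega)
    _ = ∑ z ∈ (Finset.Ico 3 (p - 1)).image e, |f z - g z| := by
        rw [Finset.sum_image he, Finset.mul_sum]
        exact (Finset.sum_congr rfl hgap).symm
    _ ≤ l1dist f g := sum_abs_sub_le_l1dist f g _

end Cascade

/-- Theorem A.9: for U-shaped attribution, the impression adjacency relation with
post-attribution enforcement is invalid: with bound `r = 1`, for every `p > 3` there are
adjacent datasets with attributed datasets at ℓ₁-distance at least `0.2 ln((p-1)/4)`;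
hence the distance is not bounded by any absolute constant `C₀`. -/
theorem post_attr_impression_ushaped_invalid :
    (∀ p : ℕ, 3 < p → ∃ D D' : Dataset, AddOneImpression D D' ∧ SortedDS D' ∧
      (0.2 : ℝ) * Real.log (((p : ℝ) - 1) / 4) ≤
        l1dist (postAttr USH (fun i => i) 1 D) (postAttr USH (fun i => i) 1 D')) ∧
    (∀ C₀ : ℝ, 0 < C₀ → ∃ D D' : Dataset, AddOneImpression D D' ∧ SortedDS D' ∧
      C₀ < l1dist (postAttr USH (fun i => i) 1 D) (postAttr USH (fun i => i) 1 D')) := by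
  have key : ∀ p : ℕ, 3 < p → (0.2 : ℝ) * Real.log (((p : ℝ) - 1) / 4) ≤
      l1dist (postAttr USH (fun i => i) 1 (Cascade.data p 2))
        (postAttr USH (fun i => i) 1 (Cascade.data p 1)) := by
    intro p hp
    refine le_trans ?_ (Cascade.log_le_l1dist_postAttr_USH hp)
    have hp' : (3 : ℝ) ≤ (p : ℝ) - 1 := by
      have : (4 : ℝ) ≤ p := by exact_mod_cast hp
      linarith
    rw [Nat.cast_sub (by omega), Nat.cast_one]
    gcongr
    norm_num
  refine ⟨fun p hp => ⟨_, _, Cascade.addOneImpression_data (by omega),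
    Cascade.sortedDS_data p 1, key p hp⟩, fun C₀ _ => ?_⟩
  obtain ⟨n, hn⟩ := exists_nat_gt (Real.exp (5 * C₀))
  have hn0 : 0 < n := by exact_mod_cast (Real.exp_pos _).trans hn
  refine ⟨_, _, Cascade.addOneImpression_data (by omega : 0 < 4 * n + 2),
    Cascade.sortedDS_data _ 1, lt_of_lt_of_le ?_ (key (4 * n + 2) (by omega))⟩
  have hgt : Real.exp (5 * C₀) < ((4 * n + 2 : ℕ) - 1 : ℝ) / 4 := by
    push_cast
    linarith
  have := (Real.lt_log_iff_exp_lt ((Real.exp_pos _).trans hgt)).2 hgt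
  linarith
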